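/- Let ℐ be a nonempty subset-closed family of admissible subsets of E_{±n} with the property that whenever I, J ∈ ℐ satisfy |I| < |J| and for all y ∈ J∖I the set {y} ∪ I is not in ℐ, then I ∪ J is inadmissible and there exists x ∉ I such that both {x} ∪ I and {−x} ∪ (I ∖ (−J)) are in ℐ. Let ℬ be the collection of maximal members of ℐ, let ≺ be an admissible total ordering of E_{±n}, and run the greedy algorithm on ℬ with respect to ≺. Let I be the set consisting of the first i elements picked up by the greedy algorithm (for some i ≥ 0), and let J be a member of ℐ with i < |J|. Then the (i+1)st element picked up by the greedy algorithm is no smaller with respect to ≺ than the smallest element of J. -/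

import Mathlib

/-- The ground set `E_{±n} = {±1, ±2, …, ±n}` as a finite set of integers. -/
noncomputable def SympE (n : ℕ) : Finset ℤ := (Finset.Icc (-(n : ℤ)) (n : ℤ)).erase 0

/-- `negSet S = {-s : s ∈ S}`. -/
def negSet (S : Finset ℤ) : Finset ℤ := S.image (fun x => -x)

/-- A set `S` is admissible if `S ∩ (-S) = ∅`. -/
def IsAdmissibleSet (S : Finset ℤ) : Prop := ∀ s ∈ S, -s ∉ S

/-- An admissible permutation of `E_{±n}`: a permutation of `ℤ` mapping `E_{±n}` to
itself and commuting with negation.  It induces the admissible total ordering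
`x ≺ y ↔ w x < w y` on `E_{±n}`. -/
def IsAdmissiblePerm (n : ℕ) (w : Equiv.Perm ℤ) : Prop :=
  (∀ x ∈ SympE n, w x ∈ SympE n) ∧ ∀ x : ℤ, w (-x) = -(w x)

/-- A weight function `ω` compatible with the admissible ordering induced by `w`:
`i ≺ j` implies `ω i ≤ ω j`. -/
def IsCompatibleWeight (n : ℕ) (w : Equiv.Perm ℤ) (ω : ℤ → ℝ) : Prop :=
  ∀ i ∈ SympE n, ∀ j ∈ SympE n, w i < w j → ω i ≤ ω j

/-- The elements of `E_{±n}` listed from largest to smallest with respect to the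
admissible ordering induced by `w`. -/
noncomputable def orderList (n : ℕ) (w : Equiv.Perm ℤ) : List ℤ :=
  (((SympE n).sort (· ≤ ·)).reverse).map w.symm

/-- The greedy algorithm: processing the elements of the list in order, starting
with the current set `B`, pick up an element iff adding it keeps the current set
a subset of some member of `ℬ`.  Returns the list of picked-up elements in order. -/
def greedyAux (ℬ : Finset (Finset ℤ)) : List ℤ → Finset ℤ → List ℤ
  | [], _ => []
  | a :: l, B =>
      if ∃ B' ∈ ℬ, insert a B ⊆ B' then a :: greedyAux ℬ l (insert a B)
      else greedyAux ℬ l B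

/-- The list of elements picked up by the greedy algorithm on `ℬ`, in decreasing
order with respect to the admissible ordering induced by `w`. -/
noncomputable def greedyPicks (n : ℕ) (ℬ : Finset (Finset ℤ)) (w : Equiv.Perm ℤ) : List ℤ :=
  greedyAux ℬ (orderList n w) ∅

/-- The greedy solution of `ℬ` with respect to the admissible ordering induced
by `w`. -/
noncomputable def greedySol (n : ℕ) (ℬ : Finset (Finset ℤ)) (w : Equiv.Perm ℤ) : Finset ℤ :=
  (greedyPicks n ℬ w).toFinset

/-- `(E_{±n}, ℬ)` is a symplectic matroid: `ℬ` is a nonempty family of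
equinumerous admissible subsets of `E_{±n}` such that for every admissible
ordering and every compatible weight function the greedy solution is optimal. -/
def IsSymplecticMatroid (n : ℕ) (ℬ : Finset (Finset ℤ)) : Prop :=
  ℬ.Nonempty ∧
  (∀ B ∈ ℬ, B ⊆ SympE n ∧ IsAdmissibleSet B) ∧
  (∀ B ∈ ℬ, ∀ B' ∈ ℬ, B.card = B'.card) ∧
  (∀ w : Equiv.Perm ℤ, IsAdmissiblePerm n w →
    ∀ ω : ℤ → ℝ, IsCompatibleWeight n w ω →
      ∀ B' ∈ ℬ, ∑ b ∈ B', ω b ≤ ∑ b ∈ greedySol n ℬ w, ω b)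

/-- The family of independent sets of `(E_{±n}, ℬ)`:
all subsets of `E_{±n}` contained in some member of `ℬ`. -/
noncomputable def indepSets (n : ℕ) (ℬ : Finset (Finset ℤ)) : Finset (Finset ℤ) :=
  (SympE n).powerset.filter (fun I => ∃ B ∈ ℬ, I ⊆ B)

/-- The collection of maximal (with respect to inclusion) members of `ℐ`. -/
def maximalMembers (ℐ : Finset (Finset ℤ)) : Finset (Finset ℤ) :=
  ℐ.filter (fun B => ∀ I ∈ ℐ, B ⊆ I → I = B)

/-- The independent-set exchange property for symplectic matroids. -/
def ExchangeProp (ℐ : Finset (Finset ℤ)) : Prop :=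
  ∀ I ∈ ℐ, ∀ J ∈ ℐ, I.card < J.card →
    (∀ y ∈ J \ I, insert y I ∉ ℐ) →
      ¬ IsAdmissibleSet (I ∪ J) ∧
        ∃ x, x ∉ I ∧ insert x I ∈ ℐ ∧ insert (-x) (I \ negSet J) ∈ ℐ

/-! Suppose the `(i+1)`-st pick `x₀` lies strictly below all of `J`. Every `y ∈ J \ I` was
rejected while the picks so far were contained in `I`, so the exchange property applies to
`I` and `J`. Its inadmissibility clause gives `a ∈ I` with `-a ∈ J`, both above `x₀`, so `x₀`
lies below `0`. The element `x` it provides cannot lie above `x₀` (it would have been picked),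
so `-x` lies above `x₀` and, the picks preceding `-x` avoiding `-J`, the set
`{-x} ∪ (I \ -J)` shows that `-x` was picked, contradicting the admissibility of `{x} ∪ I`.
The same rejection argument, applied to all picks and `J`, shows that at least `|J|` elements
are picked, so the `(i+1)`-st pick exists. -/

lemma List.toFinset_take_eq_filter {α β : Type*} [DecidableEq α] [LinearOrder β]
    {f : α → β} {l : List α} (hl : l.Pairwise (fun a b => f b < f a)) {i : ℕ}
    (hi : i < l.length) :
    (l.take i).toFinset = l.toFinset.filter (fun p => f l[i] < f p) := by
  rw [List.pairwise_iff_getElem] at hl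
  ext p
  rw [List.mem_toFinset, List.mem_take_iff_getElem, Finset.mem_filter, List.mem_toFinset,
    List.mem_iff_getElem]
  constructor
  · rintro ⟨j, hj, rfl⟩
    exact ⟨⟨j, _, rfl⟩, hl j i _ hi (lt_of_lt_of_le hj (min_le_left _ _))⟩
  · rintro ⟨⟨j, hj, rfl⟩, hlt⟩
    refine ⟨j, lt_min ?_ hj, rfl⟩
    by_contra! hij
    rcases hij.eq_or_lt with rfl | hij
    · exact lt_irrefl _ hlt
    · exact lt_asymm hlt (hl i j hi hj hij)

lemma mem_negSet {S : Finset ℤ} {x : ℤ} : x ∈ negSet S ↔ -x ∈ S := by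
  simp only [negSet, Finset.mem_image]
  exact ⟨fun ⟨y, hy, hyx⟩ => by rwa [← hyx, neg_neg], fun h => ⟨-x, h, neg_neg x⟩⟩

lemma neg_mem_sympE {n : ℕ} {z : ℤ} (hz : z ∈ SympE n) : -z ∈ SympE n := by
  simp only [SympE, Finset.mem_erase, Finset.mem_Icc] at hz ⊢
  omega

lemma exists_mem_neg_mem_of_not_isAdmissibleSet_union {I J : Finset ℤ}
    (hI : IsAdmissibleSet I) (hJ : IsAdmissibleSet J) (hIJ : ¬ IsAdmissibleSet (I ∪ J)) :
    ∃ a ∈ I, -a ∈ J := by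
  simp only [IsAdmissibleSet, Finset.mem_union, not_forall, not_not] at hIJ
  obtain ⟨a, ha | ha, hna | hna⟩ := hIJ
  · exact absurd hna (hI a ha)
  · exact ⟨a, ha, hna⟩
  · exact ⟨-a, hna, by rwa [neg_neg]⟩
  · exact absurd hna (hJ a ha)

lemma mem_orderList {n : ℕ} {w : Equiv.Perm ℤ} {z : ℤ} :
    z ∈ orderList n w ↔ w z ∈ SympE n := by
  simp only [orderList, List.mem_map, List.mem_reverse, Finset.mem_sort]
  exact ⟨by rintro ⟨u, hu, rfl⟩; simpa using hu, fun hz => ⟨w z, hz, w.symm_apply_apply z⟩⟩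

lemma pairwise_orderList (n : ℕ) (w : Equiv.Perm ℤ) :
    (orderList n w).Pairwise (fun a b => w b < w a) := by
  rw [orderList, List.pairwise_map]
  simp only [Equiv.apply_symm_apply]
  rw [List.pairwise_reverse]
  exact (Finset.sortedLT_sort (SympE n)).pairwise

section GreedyAux

variable (ℬ : Finset (Finset ℤ))

lemma greedyAux_sublist (l : List ℤ) (B : Finset ℤ) : (greedyAux ℬ l B).Sublist l := by
  induction l generalizing B with
  | nil => simp [greedyAux]
  | cons a l ih =>
    simp only [greedyAux]
    split_ifs
    · exact (ih (insert a B)).cons_cons a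
    · exact (ih B).cons a

lemma exists_union_greedyAux_subset (l : List ℤ) {B : Finset ℤ} (h : ∃ B' ∈ ℬ, B ⊆ B') :
    ∃ B' ∈ ℬ, B ∪ (greedyAux ℬ l B).toFinset ⊆ B' := by
  induction l generalizing B with
  | nil => simpa [greedyAux] using h
  | cons a l ih =>
    simp only [greedyAux]
    split_ifs with ha
    · obtain ⟨B', hB', hsub⟩ := ih ha
      refine ⟨B', hB', fun z hz => hsub ?_⟩
      simp only [Finset.mem_union, List.toFinset_cons, Finset.mem_insert] at hz ⊢
      tauto
    · exact ih h

lemma mem_greedyAux_of_exists_insert_subset {β : Type*} [LinearOrder β] {f : ℤ → β}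
    {l : List ℤ} (hl : l.Pairwise (fun a b => f b < f a)) {B : Finset ℤ} {z : ℤ} (hz : z ∈ l)
    (h : ∃ B' ∈ ℬ, insert z (B ∪ (greedyAux ℬ l B).toFinset.filter (fun p => f z < f p)) ⊆ B') :
    z ∈ greedyAux ℬ l B := by
  induction l generalizing B with
  | nil => simp at hz
  | cons a l ih =>
    rw [List.pairwise_cons] at hl
    simp only [greedyAux] at h ⊢
    split_ifs with ha
    · rw [if_pos ha] at h
      rcases List.mem_cons.1 hz with rfl | hz
      · exact List.mem_cons_self
      refine List.mem_cons_of_mem _ (ih hl.2 hz ?_)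
      obtain ⟨B', hB', hsub⟩ := h
      refine ⟨B', hB', fun u hu => hsub ?_⟩
      simp only [Finset.mem_insert, Finset.mem_union, Finset.mem_filter, List.mem_toFinset,
        List.mem_cons] at hu ⊢
      have := hl.1 z hz
      aesop
    · rw [if_neg ha] at h
      rcases List.mem_cons.1 hz with rfl | hz
      · obtain ⟨B', hB', hsub⟩ := h
        have hzB : insert z B ⊆ B' :=
          (Finset.insert_subset_insert _ Finset.subset_union_left).trans hsub
        exact absurd ⟨B', hB', hzB⟩ ha
      · exact ih hl.2 hz h

end GreedyAux

lemma pairwise_greedyPicks (n : ℕ) (ℬ : Finset (Finset ℤ)) (w : Equiv.Perm ℤ) :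
    (greedyPicks n ℬ w).Pairwise (fun a b => w b < w a) :=
  (pairwise_orderList n w).sublist (greedyAux_sublist ℬ _ _)

section Greedy

variable {n : ℕ} {ℐ : Finset (Finset ℤ)} {w : Equiv.Perm ℤ}

lemma exists_mem_maximalMembers_superset {K : Finset ℤ} (hK : K ∈ ℐ) :
    ∃ B ∈ maximalMembers ℐ, K ⊆ B := by
  obtain ⟨M, hM, hMmax⟩ := (ℐ.filter (K ⊆ ·)).exists_max_image Finset.card
    ⟨K, Finset.mem_filter.2 ⟨hK, subset_rfl⟩⟩
  rw [Finset.mem_filter] at hM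
  refine ⟨M, Finset.mem_filter.2 ⟨hM.1, fun X hX hMX => ?_⟩, hM.2⟩
  exact (Finset.eq_of_subset_of_card_le hMX
    (hMmax X (Finset.mem_filter.2 ⟨hX, hM.2.trans hMX⟩))).symm

lemma greedyPicks_toFinset_mem (hclosed : ∀ I ∈ ℐ, ∀ I' ⊆ I, I' ∈ ℐ) (hne : ℐ.Nonempty) :
    (greedyPicks n (maximalMembers ℐ) w).toFinset ∈ ℐ := by
  obtain ⟨B₀, hB₀, -⟩ := exists_mem_maximalMembers_superset hne.choose_spec
  obtain ⟨B, hB, hsub⟩ :=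
    exists_union_greedyAux_subset _ (orderList n w) ⟨B₀, hB₀, Finset.empty_subset _⟩
  exact hclosed B (Finset.mem_filter.1 hB).1 _ ((Finset.subset_union_right).trans hsub)

lemma mem_greedyPicks_of_insert_mem (hw : IsAdmissiblePerm n w) {z : ℤ} (hz : z ∈ SympE n)
    {S : Finset ℤ}
    (hS : (greedyPicks n (maximalMembers ℐ) w).toFinset.filter (fun p => w z < w p) ⊆ S)
    (hzS : insert z S ∈ ℐ) :
    z ∈ greedyPicks n (maximalMembers ℐ) w := by
  obtain ⟨B, hB, hsub⟩ := exists_mem_maximalMembers_superset hzS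
  refine mem_greedyAux_of_exists_insert_subset _ (pairwise_orderList n w)
    (mem_orderList.2 (hw.1 z hz)) ⟨B, hB, ?_⟩
  rw [Finset.empty_union]
  exact (Finset.insert_subset_insert _ hS).trans hsub

variable (hclosed : ∀ I ∈ ℐ, ∀ I' ⊆ I, I' ∈ ℐ) (hadm : ∀ I ∈ ℐ, I ⊆ SympE n ∧ IsAdmissibleSet I)
  (hex : ExchangeProp ℐ) (hw : IsAdmissiblePerm n w)
include hclosed hadm hex hw

lemma card_le_length_greedyPicks {J : Finset ℤ} (hJ : J ∈ ℐ) :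
    J.card ≤ (greedyPicks n (maximalMembers ℐ) w).length := by
  set P := greedyPicks n (maximalMembers ℐ) w
  by_contra! hlen
  have hpicked : ∀ z ∈ SympE n, insert z P.toFinset ∈ ℐ → z ∈ P.toFinset := fun z hz hzP =>
    List.mem_toFinset.2 (mem_greedyPicks_of_insert_mem hw hz (Finset.filter_subset _ _) hzP)
  obtain ⟨-, x, hxP, hx, -⟩ := hex _ (greedyPicks_toFinset_mem hclosed ⟨J, hJ⟩) J hJ
    ((List.toFinset_card_le P).trans_lt hlen) fun y hy hyP =>
      (Finset.mem_sdiff.1 hy).2 (hpicked y ((hadm J hJ).1 (Finset.mem_sdiff.1 hy).1) hyP)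
  exact hxP (hpicked x ((hadm _ hx).1 (Finset.mem_insert_self _ _)) hx)

lemma exists_mem_le_getElem_greedyPicks {i : ℕ}
    (hi : i < (greedyPicks n (maximalMembers ℐ) w).length)
    {J : Finset ℤ} (hJ : J ∈ ℐ) (hiJ : i < J.card) :
    ∃ y ∈ J, w y ≤ w (greedyPicks n (maximalMembers ℐ) w)[i] := by
  set P := greedyPicks n (maximalMembers ℐ) w
  set x₀ := P[i]
  by_contra! hJabove
  set I := (P.take i).toFinset
  have hIeq : I = P.toFinset.filter (fun p => w x₀ < w p) :=
    List.toFinset_take_eq_filter (pairwise_greedyPicks n _ w) hi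
  have hIℐ : I ∈ ℐ :=
    hclosed _ (greedyPicks_toFinset_mem hclosed ⟨J, hJ⟩) I (hIeq ▸ Finset.filter_subset _ _)
  have hIcard : I.card < J.card :=
    (List.toFinset_card_le _).trans_lt ((List.length_take_le _ _).trans_lt hiJ)
  have hpicked : ∀ z ∈ SympE n, w x₀ < w z → ∀ S,
      P.toFinset.filter (fun p => w z < w p) ⊆ S → insert z S ∈ ℐ → z ∈ I := by
    intro z hz hz₀ S hS hzS
    rw [hIeq, Finset.mem_filter, List.mem_toFinset]
    exact ⟨mem_greedyPicks_of_insert_mem hw hz hS hzS, hz₀⟩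
  have hfilter_subset : ∀ {z}, w x₀ < w z → P.toFinset.filter (fun p => w z < w p) ⊆ I := by
    intro z hz₀ p hp
    rw [Finset.mem_filter] at hp
    rw [hIeq, Finset.mem_filter]
    exact ⟨hp.1, hz₀.trans hp.2⟩
  obtain ⟨hinadm, x, hxI, hx, hnx⟩ := hex I hIℐ J hJ hIcard fun y hy hyI =>
    have hyJ := (Finset.mem_sdiff.1 hy).1
    (Finset.mem_sdiff.1 hy).2 <|
      hpicked y ((hadm J hJ).1 hyJ) (hJabove y hyJ) I (hfilter_subset (hJabove y hyJ)) hyI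
  obtain ⟨a, haI, hnaJ⟩ :=
    exists_mem_neg_mem_of_not_isAdmissibleSet_union (hadm I hIℐ).2 (hadm J hJ).2 hinadm
  have hx₀_neg : w x₀ < 0 := by
    have ha : w x₀ < w a := by
      rw [hIeq, Finset.mem_filter] at haI
      exact haI.2
    have hna := hJabove _ hnaJ
    rw [hw.2] at hna
    linarith
  have hxS : x ∈ SympE n := (hadm _ hx).1 (Finset.mem_insert_self _ _)
  have hx_le : w x ≤ w x₀ := by
    by_contra! h
    exact hxI (hpicked x hxS h I (hfilter_subset h) hx)
  have hnxI : -x ∉ I := fun h =>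
    (hadm _ hx).2 x (Finset.mem_insert_self _ _) (Finset.mem_insert_of_mem h)
  refine hnxI (hpicked (-x) (neg_mem_sympE hxS) (by rw [hw.2]; linarith) _ ?_ hnx)
  intro p hp
  rw [Finset.mem_filter, List.mem_toFinset, hw.2] at hp
  refine Finset.mem_sdiff.2 ⟨hIeq ▸ Finset.mem_filter.2 ⟨List.mem_toFinset.2 hp.1, by linarith⟩,
    fun hpJ => ?_⟩
  have := hJabove _ (mem_negSet.1 hpJ)
  rw [hw.2] at this
  linarith

end Greedy

theorem greedy_star_claim_general (n : ℕ) (ℐ : Finset (Finset ℤ))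
    (hclosed : ∀ I ∈ ℐ, ∀ I' ⊆ I, I' ∈ ℐ)
    (hadm : ∀ I ∈ ℐ, I ⊆ SympE n ∧ IsAdmissibleSet I)
    (hex : ExchangeProp ℐ)
    (w : Equiv.Perm ℤ) (hw : IsAdmissiblePerm n w)
    (i : ℕ) (I : Finset ℤ)
    (J : Finset ℤ) (hJ : J ∈ ℐ) (hiJ : i < J.card) :
    ∃ x, (greedyPicks n (maximalMembers ℐ) w)[i]? = some x ∧
      ∃ y ∈ J, (∀ y' ∈ J, w y ≤ w y') ∧ w y ≤ w x := by
  have hi : i < (greedyPicks n (maximalMembers ℐ) w).length :=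
    hiJ.trans_le (card_le_length_greedyPicks hclosed hadm hex hw hJ)
  obtain ⟨y, hyJ, hymin⟩ := J.exists_min_image w (Finset.card_pos.1 (i.zero_le.trans_lt hiJ))
  obtain ⟨y', hy'J, hy'⟩ := exists_mem_le_getElem_greedyPicks hclosed hadm hex hw hi hJ hiJ
  exact ⟨_, List.getElem?_eq_getElem hi, y, hyJ, hymin, (hymin y' hy'J).trans hy'⟩

/-- **Claim `(*)`.** Let `ℐ` be a nonempty subset-closed family of admissible
subsets of `E_{±n}` with the exchange property, and run the greedy algorithm on
the collection of maximal members of `ℐ` with respect to an admissible ordering.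
If `I` is the set of the first `i` elements picked up and `J ∈ ℐ` has `i < |J|`,
then the `(i+1)`-st element picked up exists and is no smaller (with respect to
the ordering) than the smallest element of `J`. -/
theorem greedy_star_claim (n : ℕ) (hn : 0 < n) (ℐ : Finset (Finset ℤ))
    (hne : ℐ.Nonempty)
    (hclosed : ∀ I ∈ ℐ, ∀ I' ⊆ I, I' ∈ ℐ)
    (hadm : ∀ I ∈ ℐ, I ⊆ SympE n ∧ IsAdmissibleSet I)
    (hex : ExchangeProp ℐ)
    (w : Equiv.Perm ℤ) (hw : IsAdmissiblePerm n w)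
    (i : ℕ) (I : Finset ℤ)
    (hI : I = ((greedyPicks n (maximalMembers ℐ) w).take i).toFinset)
    (J : Finset ℤ) (hJ : J ∈ ℐ) (hiJ : i < J.card) :
    ∃ x, (greedyPicks n (maximalMembers ℐ) w)[i]? = some x ∧
      ∃ y ∈ J, (∀ y' ∈ J, w y ≤ w y') ∧ w y ≤ w x :=
  greedy_star_claim_general n ℐ hclosed hadm hex w hw i I J hJ hiJ
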